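/- Let ϑ ≥ 2π, let a, b ∈ ℝ with |a| ≤ ϑ and ϑ^{-1} ≤ b ≤ ϑ, and let λ ∈ ℂ with Re λ ≥ 1. Then λ - 𝔸_{a,b} is an isomorphism from H^2(𝕊) onto H^1(𝕊), where 𝔸_{a,b} = a ∂_x - b (-∂_x²)^{1/2} is the Fourier multiplier with symbol i·a·m - b·|m|. -/

import Mathlib

open Real

/-- The squared Sobolev norm of order `r` of a sequence of Fourier coefficients. -/
noncomputable def HSobNormSq (r : ℝ) (c : ℤ → ℂ) : ℝ :=
  ∑' m : ℤ, (1 + (m : ℝ) ^ 2) ^ r * ‖c m‖ ^ 2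

/-- Membership in the periodic Sobolev space `H^r(𝕊)`, in terms of Fourier coefficients. -/
def MemHSob (r : ℝ) (c : ℤ → ℂ) : Prop :=
  Summable fun m : ℤ => (1 + (m : ℝ) ^ 2) ^ r * ‖c m‖ ^ 2

/-!
The symbol `σ(m) = λ - i a m + b |m|` is comparable to `(1 + m²)^{1/2}`: the upper bound is the
triangle inequality, the lower bound comes from `Re σ(m) ≥ 1 + b |m|` with `b > 0`. Multiplying by
such a symbol changes every Sobolev weight by a bounded factor in both directions, so it maps
`H^{r+1}` boundedly into `H^r`, and division by the symbol is its bounded inverse.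
-/

section SobolevComparison

variable {r s K : ℝ} {c d σ : ℤ → ℂ}

theorem MemHSob.of_le (hd : MemHSob s d)
    (h : ∀ m : ℤ, (1 + (m : ℝ) ^ 2) ^ r * ‖c m‖ ^ 2 ≤ K * ((1 + (m : ℝ) ^ 2) ^ s * ‖d m‖ ^ 2)) :
    MemHSob r c :=
  Summable.of_nonneg_of_le (fun _ => by positivity) h (hd.mul_left K)

theorem hSobNormSq_le_of_le (hd : MemHSob s d)
    (h : ∀ m : ℤ, (1 + (m : ℝ) ^ 2) ^ r * ‖c m‖ ^ 2 ≤ K * ((1 + (m : ℝ) ^ 2) ^ s * ‖d m‖ ^ 2)) :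
    HSobNormSq r c ≤ K * HSobNormSq s d := by
  rw [HSobNormSq, HSobNormSq, ← tsum_mul_left]
  exact (hd.of_le h).tsum_le_tsum h (hd.mul_left K)

theorem hSobNormSq_nonneg (r : ℝ) (c : ℤ → ℂ) : 0 ≤ HSobNormSq r c :=
  tsum_nonneg fun _ => by positivity

theorem one_add_sq_rpow_add_one (r x : ℝ) : (1 + x ^ 2) ^ (r + 1) = (1 + x ^ 2) ^ r * (1 + x ^ 2) :=
  rpow_add_one (by positivity) r

theorem weight_mul_sq_norm_mul_le (hσ : ∀ m : ℤ, ‖σ m‖ ^ 2 ≤ K * (1 + (m : ℝ) ^ 2)) (m : ℤ) :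
    (1 + (m : ℝ) ^ 2) ^ r * ‖σ m * c m‖ ^ 2 ≤
      K * ((1 + (m : ℝ) ^ 2) ^ (r + 1) * ‖c m‖ ^ 2) := by
  rw [norm_mul, mul_pow, one_add_sq_rpow_add_one]
  calc (1 + (m : ℝ) ^ 2) ^ r * (‖σ m‖ ^ 2 * ‖c m‖ ^ 2)
      = (1 + (m : ℝ) ^ 2) ^ r * ‖c m‖ ^ 2 * ‖σ m‖ ^ 2 := by ring
    _ ≤ (1 + (m : ℝ) ^ 2) ^ r * ‖c m‖ ^ 2 * (K * (1 + (m : ℝ) ^ 2)) := by gcongr; exact hσ m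
    _ = K * ((1 + (m : ℝ) ^ 2) ^ r * (1 + (m : ℝ) ^ 2) * ‖c m‖ ^ 2) := by ring

theorem weight_mul_sq_norm_le_mul (hσ : ∀ m : ℤ, 1 + (m : ℝ) ^ 2 ≤ K * ‖σ m‖ ^ 2) (m : ℤ) :
    (1 + (m : ℝ) ^ 2) ^ (r + 1) * ‖c m‖ ^ 2 ≤
      K * ((1 + (m : ℝ) ^ 2) ^ r * ‖σ m * c m‖ ^ 2) := by
  rw [norm_mul, mul_pow, one_add_sq_rpow_add_one]
  calc (1 + (m : ℝ) ^ 2) ^ r * (1 + (m : ℝ) ^ 2) * ‖c m‖ ^ 2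
      = (1 + (m : ℝ) ^ 2) ^ r * ‖c m‖ ^ 2 * (1 + (m : ℝ) ^ 2) := by ring
    _ ≤ (1 + (m : ℝ) ^ 2) ^ r * ‖c m‖ ^ 2 * (K * ‖σ m‖ ^ 2) := by gcongr; exact hσ m
    _ = K * ((1 + (m : ℝ) ^ 2) ^ r * (‖σ m‖ ^ 2 * ‖c m‖ ^ 2)) := by ring

theorem ne_zero_of_one_add_sq_le (hσ : ∀ m : ℤ, 1 + (m : ℝ) ^ 2 ≤ K * ‖σ m‖ ^ 2) (m : ℤ) :
    σ m ≠ 0 := by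
  intro h0
  have := hσ m
  rw [h0, norm_zero] at this
  nlinarith [sq_nonneg (m : ℝ)]

theorem MemHSob.div (hσ : ∀ m : ℤ, 1 + (m : ℝ) ^ 2 ≤ K * ‖σ m‖ ^ 2) (hd : MemHSob r d) :
    MemHSob (r + 1) fun m => d m / σ m := by
  refine hd.of_le (K := K) fun m => ?_
  simpa only [mul_div_cancel₀ _ (ne_zero_of_one_add_sq_le hσ m)] using
    weight_mul_sq_norm_le_mul (c := fun m => d m / σ m) hσ m

theorem sqrt_le_sqrt_mul_sqrt_of_le {x y K C : ℝ} (h : x ≤ K * y) (hKC : K ≤ C) (hy : 0 ≤ y) :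
    √x ≤ √C * √y := by
  rw [← sqrt_mul' C hy]
  exact sqrt_le_sqrt (h.trans (by gcongr))

theorem multiplier_isomorphism_of_sq_norm_comparable {k : ℝ}
    (hup : ∀ m : ℤ, ‖σ m‖ ^ 2 ≤ K * (1 + (m : ℝ) ^ 2))
    (hlow : ∀ m : ℤ, 1 + (m : ℝ) ^ 2 ≤ k * ‖σ m‖ ^ 2) :
    (∀ c : ℤ → ℂ, MemHSob (r + 1) c → MemHSob r (fun m => σ m * c m)) ∧
    (∀ d : ℤ → ℂ, MemHSob r d →
        ∃! c : ℤ → ℂ, MemHSob (r + 1) c ∧ ∀ m : ℤ, σ m * c m = d m) ∧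
    ∃ C : ℝ, 0 < C ∧
      (∀ c : ℤ → ℂ, MemHSob (r + 1) c →
        √(HSobNormSq r (fun m => σ m * c m)) ≤ C * √(HSobNormSq (r + 1) c)) ∧
      (∀ c : ℤ → ℂ, MemHSob (r + 1) c →
        √(HSobNormSq (r + 1) c) ≤ C * √(HSobNormSq r (fun m => σ m * c m))) := by
  have hσ := ne_zero_of_one_add_sq_le hlow
  have hK : 0 ≤ K := by nlinarith [hup 0, norm_nonneg (σ 0)]
  have hk : 0 < k := by nlinarith [hlow 0, norm_nonneg (σ 0)]
  have hmul : ∀ c, MemHSob (r + 1) c → MemHSob r (fun m => σ m * c m) := fun c hc =>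
    hc.of_le (weight_mul_sq_norm_mul_le hup)
  refine ⟨hmul, fun d hd => ⟨fun m => d m / σ m,
      ⟨hd.div hlow, fun m => mul_div_cancel₀ _ (hσ m)⟩, ?_⟩, √(K + k), by positivity, ?_, ?_⟩
  · rintro c ⟨-, hc⟩
    funext m
    exact eq_div_of_mul_eq (hσ m) ((mul_comm _ _).trans (hc m))
  · intro c hc
    exact sqrt_le_sqrt_mul_sqrt_of_le (hSobNormSq_le_of_le hc (weight_mul_sq_norm_mul_le hup))
      (by linarith) (hSobNormSq_nonneg _ _)
  · intro c hc
    exact sqrt_le_sqrt_mul_sqrt_of_le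
      (hSobNormSq_le_of_le (hmul c hc) (weight_mul_sq_norm_le_mul hlow))
      (by linarith) (hSobNormSq_nonneg _ _)

end SobolevComparison

section Symbol

variable (l : ℂ) (a b : ℝ) (m : ℤ)

theorem norm_symbol_le :
    ‖l - (Complex.I * a * m - b * |(m : ℝ)|)‖ ≤ (‖l‖ + |a| + |b|) * (1 + |(m : ℝ)|) := by
  have hI : ‖Complex.I * a * m‖ = |a| * |(m : ℝ)| := by
    rw [norm_mul, norm_mul, Complex.norm_I, one_mul, Complex.norm_real, Complex.norm_intCast,
      Real.norm_eq_abs]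
  have hb : ‖(b : ℂ) * |(m : ℝ)|‖ = |b| * |(m : ℝ)| := by
    rw [norm_mul, Complex.norm_real, Complex.norm_real, Real.norm_eq_abs, Real.norm_eq_abs,
      abs_abs]
  calc ‖l - (Complex.I * a * m - b * |(m : ℝ)|)‖
      ≤ ‖l‖ + (|a| * |(m : ℝ)| + |b| * |(m : ℝ)|) :=
        (norm_sub_le _ _).trans (by gcongr; exact hI ▸ hb ▸ norm_sub_le _ _)
    _ ≤ (‖l‖ + |a| + |b|) * (1 + |(m : ℝ)|) := by
        nlinarith [mul_nonneg (norm_nonneg l) (abs_nonneg (m : ℝ)), abs_nonneg a, abs_nonneg b]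

theorem sq_norm_symbol_le :
    ‖l - (Complex.I * a * m - b * |(m : ℝ)|)‖ ^ 2 ≤
      2 * (‖l‖ + |a| + |b|) ^ 2 * (1 + (m : ℝ) ^ 2) := by
  have hmono := pow_le_pow_left₀ (norm_nonneg _) (norm_symbol_le l a b m) 2
  have habs : (1 + |(m : ℝ)|) ^ 2 ≤ 2 * (1 + (m : ℝ) ^ 2) := by
    nlinarith [sq_abs (m : ℝ), sq_nonneg (1 - |(m : ℝ)|)]
  calc _ ≤ ((‖l‖ + |a| + |b|) * (1 + |(m : ℝ)|)) ^ 2 := hmono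
    _ = (‖l‖ + |a| + |b|) ^ 2 * (1 + |(m : ℝ)|) ^ 2 := mul_pow _ _ _
    _ ≤ (‖l‖ + |a| + |b|) ^ 2 * (2 * (1 + (m : ℝ) ^ 2)) := by gcongr
    _ = _ := by ring

theorem re_symbol : (l - (Complex.I * a * m - b * |(m : ℝ)|)).re = l.re + b * |(m : ℝ)| := by
  simp

variable {l b}

theorem one_add_sq_le_sq_norm_symbol (hb : 0 < b) (hl : 1 ≤ l.re) :
    1 + (m : ℝ) ^ 2 ≤ (1 + b⁻¹) ^ 2 * ‖l - (Complex.I * a * m - b * |(m : ℝ)|)‖ ^ 2 := by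
  have hre : 1 + |(m : ℝ)| ≤ (1 + b⁻¹) * ‖l - (Complex.I * a * m - b * |(m : ℝ)|)‖ :=
    calc 1 + |(m : ℝ)| ≤ (1 + b⁻¹) * (1 + b * |(m : ℝ)|) := by
          have : b⁻¹ * (b * |(m : ℝ)|) = |(m : ℝ)| := inv_mul_cancel_left₀ hb.ne' _
          nlinarith [abs_nonneg (m : ℝ), inv_pos.2 hb]
      _ ≤ (1 + b⁻¹) * ‖l - (Complex.I * a * m - b * |(m : ℝ)|)‖ := by
          gcongr
          calc 1 + b * |(m : ℝ)| ≤ (l - (Complex.I * a * m - b * |(m : ℝ)|)).re := by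
                rw [re_symbol]; linarith
            _ ≤ _ := Complex.re_le_norm _
  calc 1 + (m : ℝ) ^ 2 ≤ (1 + |(m : ℝ)|) ^ 2 := by nlinarith [sq_abs (m : ℝ), abs_nonneg (m : ℝ)]
    _ ≤ _ := by rw [← mul_pow]; gcongr

end Symbol

theorem lambda_sub_multiplier_isomorphism_general (ϑ : ℝ) (hϑ : 2 * π ≤ ϑ)
    (a b : ℝ) (hb1 : ϑ⁻¹ ≤ b)
    (l : ℂ) (hl : 1 ≤ l.re) :
    (∀ c : ℤ → ℂ, MemHSob 2 c →
        MemHSob 1 (fun m => (l - (Complex.I * a * m - b * |(m : ℝ)|)) * c m)) ∧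
    (∀ d : ℤ → ℂ, MemHSob 1 d →
        ∃! c : ℤ → ℂ, MemHSob 2 c ∧
          ∀ m : ℤ, (l - (Complex.I * a * m - b * |(m : ℝ)|)) * c m = d m) ∧
    ∃ C : ℝ, 0 < C ∧
      (∀ c : ℤ → ℂ, MemHSob 2 c →
        Real.sqrt (HSobNormSq 1 (fun m =>
            (l - (Complex.I * a * m - b * |(m : ℝ)|)) * c m)) ≤
          C * Real.sqrt (HSobNormSq 2 c)) ∧
      (∀ c : ℤ → ℂ, MemHSob 2 c →
        Real.sqrt (HSobNormSq 2 c) ≤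
          C * Real.sqrt (HSobNormSq 1 (fun m =>
            (l - (Complex.I * a * m - b * |(m : ℝ)|)) * c m))) := by
  have hb : 0 < b := (inv_pos.2 (by linarith [pi_pos])).trans_le hb1
  have h := multiplier_isomorphism_of_sq_norm_comparable (r := 1)
    (sq_norm_symbol_le l a b) (fun m => one_add_sq_le_sq_norm_symbol a m hb hl)
  rwa [one_add_one_eq_two] at h

/-- For `ϑ ≥ 2π`, `|a| ≤ ϑ`, `ϑ⁻¹ ≤ b ≤ ϑ` and `Re λ ≥ 1`, the operator `λ - 𝔸_{a,b}`,
where `𝔸_{a,b}` is the Fourier multiplier with symbol `i·a·m - b·|m|`, is an isomorphism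
from `H²(𝕊)` onto `H¹(𝕊)`: it maps `H²` into `H¹`, is bijective onto `H¹`, and both it
and its inverse are bounded. -/
theorem lambda_sub_multiplier_isomorphism (ϑ : ℝ) (hϑ : 2 * π ≤ ϑ)
    (a b : ℝ) (ha : |a| ≤ ϑ) (hb1 : ϑ⁻¹ ≤ b) (hb2 : b ≤ ϑ)
    (l : ℂ) (hl : 1 ≤ l.re) :
    (∀ c : ℤ → ℂ, MemHSob 2 c →
        MemHSob 1 (fun m => (l - (Complex.I * a * m - b * |(m : ℝ)|)) * c m)) ∧
    (∀ d : ℤ → ℂ, MemHSob 1 d →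
        ∃! c : ℤ → ℂ, MemHSob 2 c ∧
          ∀ m : ℤ, (l - (Complex.I * a * m - b * |(m : ℝ)|)) * c m = d m) ∧
    ∃ C : ℝ, 0 < C ∧
      (∀ c : ℤ → ℂ, MemHSob 2 c →
        Real.sqrt (HSobNormSq 1 (fun m =>
            (l - (Complex.I * a * m - b * |(m : ℝ)|)) * c m)) ≤
          C * Real.sqrt (HSobNormSq 2 c)) ∧
      (∀ c : ℤ → ℂ, MemHSob 2 c →
        Real.sqrt (HSobNormSq 2 c) ≤
          C * Real.sqrt (HSobNormSq 1 (fun m =>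
            (l - (Complex.I * a * m - b * |(m : ℝ)|)) * c m))) :=
  lambda_sub_multiplier_isomorphism_general ϑ hϑ a b hb1 l hl
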